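/- arXiv:2503.11356 — 4 statements merged into one kernel-verified Lean document; each statement's English description precedes it below -/
import Mathlib

section
/- The function g(V) = Σ_{k=1}^K ω_k log det(I + V_k^H H_k^H F̃_k(V)^{-1} H_k V_k), where F̃_k(V) = ((σ²/P) Σ_j ‖V_j‖_F²) I + Σ_{j≠k} H_k V_j V_j^H H_k^H, satisfies g(cV) = g(V) for every nonzero scalar c ∈ ℂ. -/
/-!
Scaling `V` by `c` multiplies both the power term and every interference term
`H_k V_j V_jᴴ H_kᴴ` by `|c|²`, so `F̃_k(cV) = |c|² F̃_k(V)`; in `V_kᴴ H_kᴴ F̃_k⁻¹ H_k V_k` this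
factor `|c|⁻²` is cancelled by the `c̄` and `c` coming from `V_kᴴ` and `V_k`.
-/

open Matrix Finset

-- Unlike `Matrix.inv_smul'`, no invertibility of `A` is needed: both sides vanish if it is singular.
theorem Matrix.inv_smul_of_ne_zero {n K : Type*} [Fintype n] [DecidableEq n] [Field K]
    {s : K} (hs : s ≠ 0) (A : Matrix n n K) : (s • A)⁻¹ = s⁻¹ • A⁻¹ := by
  by_cases hA : IsUnit A.det
  · exact inv_smul' A (Units.mk0 s hs) hA
  · have hsA : ¬IsUnit (s • A).det := by
      rwa [det_smul, IsUnit.mul_iff, and_iff_right ((Ne.isUnit hs).pow _)]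
    rw [nonsing_inv_apply_not_isUnit _ hA, nonsing_inv_apply_not_isUnit _ hsA, smul_zero]

lemma Complex.star_mul_self_eq_normSq (c : ℂ) : star c * c = (Complex.normSq c : ℂ) :=
  Complex.normSq_eq_conj_mul_self.symm

lemma Matrix.mul_smul_mul_conjTranspose_smul {m n p : Type*} [Fintype n] [Fintype p]
    (G : Matrix m n ℂ) (X : Matrix n p ℂ) (c : ℂ) :
    G * (c • X) * (c • X)ᴴ * Gᴴ = (Complex.normSq c : ℂ) • (G * X * Xᴴ * Gᴴ) := by
  rw [conjTranspose_smul, Matrix.mul_smul, smul_mul, Matrix.mul_smul, smul_mul, smul_mul,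
    smul_smul, Complex.star_mul_self_eq_normSq]

lemma Matrix.sum_normSq_smul {n p : Type*} [Fintype n] [Fintype p] (X : Matrix n p ℂ) (c : ℂ) :
    ∑ a, ∑ b, Complex.normSq ((c • X) a b) =
      Complex.normSq c * ∑ a, ∑ b, Complex.normSq (X a b) := by
  simp only [smul_apply, smul_eq_mul, Complex.normSq_mul, mul_sum]

lemma Matrix.conjTranspose_mul_inv_mul_smul {m n p : Type*} [Fintype m] [DecidableEq m]
    [Fintype n] (G : Matrix m n ℂ) (F : Matrix m m ℂ) (X : Matrix n p ℂ) {c : ℂ} (hc : c ≠ 0) :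
    (c • X)ᴴ * Gᴴ * ((Complex.normSq c : ℂ) • F)⁻¹ * G * (c • X) = Xᴴ * Gᴴ * F⁻¹ * G * X := by
  have hn : (Complex.normSq c : ℂ) ≠ 0 := by exact_mod_cast Complex.normSq_pos.2 hc |>.ne'
  rw [inv_smul_of_ne_zero hn]
  simp only [conjTranspose_smul, smul_mul, Matrix.mul_smul, smul_smul]
  rw [mul_left_comm, mul_comm c, Complex.star_mul_self_eq_normSq, inv_mul_cancel₀ hn, one_smul]

theorem stmt1_general {M N d K : ℕ}
    (H : Fin K → Matrix (Fin N) (Fin M) ℂ)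
    (ω : Fin K → ℝ)
    (σ2 P : ℝ)
    (F : (Fin K → Matrix (Fin M) (Fin d) ℂ) → Fin K → Matrix (Fin N) (Fin N) ℂ)
    (hF : ∀ V k, F V k =
      (((σ2 / P) * ∑ j, ∑ a, ∑ b, Complex.normSq (V j a b) : ℝ) : ℂ) • (1 : Matrix (Fin N) (Fin N) ℂ)
        + ∑ j ∈ Finset.univ.erase k, H k * V j * (V j)ᴴ * (H k)ᴴ)
    (g : (Fin K → Matrix (Fin M) (Fin d) ℂ) → ℝ)
    (hg : ∀ V, g V = ∑ k, ω k *
      Real.log ‖(1 + (V k)ᴴ * (H k)ᴴ * (F V k)⁻¹ * (H k) * V k).det‖)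
    (V : Fin K → Matrix (Fin M) (Fin d) ℂ)
    (c : ℂ) (hc : c ≠ 0) :
    g (fun k => c • V k) = g V := by
  have hF_smul : ∀ k, F (fun k => c • V k) k = (Complex.normSq c : ℂ) • F V k := by
    intro k
    simp only [hF, sum_normSq_smul, mul_smul_mul_conjTranspose_smul, smul_add, smul_sum,
      smul_smul]
    push_cast [mul_sum]
    ring_nf
  simp only [hg, hF_smul, conjTranspose_mul_inv_mul_smul _ _ _ hc]

/-- The WSR objective `g(V) = Σ_k ω_k log|det(I + V_kᴴ H_kᴴ F̃_k(V)⁻¹ H_k V_k)|`, with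
`F̃_k(V) = ((σ²/P) Σ_j ‖V_j‖_F²) I + Σ_{j≠k} H_k V_j V_jᴴ H_kᴴ`, is scale-invariant:
`g (c • V) = g V` for every nonzero complex scalar `c`. -/
theorem stmt1 {M N d K : ℕ}
    (H : Fin K → Matrix (Fin N) (Fin M) ℂ)
    (ω : Fin K → ℝ) (hω : ∀ k, 0 < ω k)
    (σ2 P : ℝ) (hσ : 0 < σ2) (hP : 0 < P)
    (F : (Fin K → Matrix (Fin M) (Fin d) ℂ) → Fin K → Matrix (Fin N) (Fin N) ℂ)
    (hF : ∀ V k, F V k =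
      (((σ2 / P) * ∑ j, ∑ a, ∑ b, Complex.normSq (V j a b) : ℝ) : ℂ) • (1 : Matrix (Fin N) (Fin N) ℂ)
        + ∑ j ∈ Finset.univ.erase k, H k * V j * (V j)ᴴ * (H k)ᴴ)
    (g : (Fin K → Matrix (Fin M) (Fin d) ℂ) → ℝ)
    (hg : ∀ V, g V = ∑ k, ω k *
      Real.log ‖(1 + (V k)ᴴ * (H k)ᴴ * (F V k)⁻¹ * (H k) * V k).det‖)
    (V : Fin K → Matrix (Fin M) (Fin d) ℂ) (hV : V ≠ 0)
    (c : ℂ) (hc : c ≠ 0) :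
    g (fun k => c • V k) = g V :=
  stmt1_general H ω σ2 P F hF g hg V c hc
end

section
/- With step sizes η_t = ((λ_M+λ₁)/2 + ((λ_M−λ₁)/2)·cos((t+1/2)π/T))^{−1} for t = 0,…,T−1, the polynomial ∏_{t=0}^{T−1}(1 − η_t λ), as a function of λ, equals S(x(λ))/S(γ) under the affine change of variable x(λ) = (λ_M+λ₁)/(λ_M−λ₁) − 2λ/(λ_M−λ₁), where γ = (λ_M+λ₁)/(λ_M−λ₁) and S is the degree-T Chebyshev polynomial of the first kind. -/
/-!
The roots of `T_n` are the Chebyshev nodes `c_k = cos((2k+1)π/(2n))`, so `T_n` is `2^(n-1)`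
times `∏ (X - c_k)`, and since the nodes are symmetric about `0` also times `∏ (X + c_k)`.
Hence `T_n(y) / T_n(γ) = ∏ (y + c_k) / (γ + c_k)`. The step sizes are the reciprocals of the
nodes mapped affinely onto `[λ₁, λ_M]`, and under `x(λ)` the `k`-th factor
`(x(λ) + c_k) / (γ + c_k)` is exactly `1 - η_k λ`.
-/

open Polynomial Real Finset

namespace Polynomial.Chebyshev

theorem T_real_eq_C_mul_prod (n : ℕ) :
    T ℝ n = Polynomial.C (2 ^ (n - 1)) *
      ∏ k ∈ range n, (X - Polynomial.C (cos ((2 * k + 1) * π / (2 * n)))) := by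
  have hinj : Set.InjOn (fun k : ℕ => cos ((2 * k + 1) * π / (2 * n))) (range n) :=
    (range n).nodup_map_iff_injOn.mp (roots_T_real_nodup n)
  have hcard : Multiset.card (T ℝ n).roots = (T ℝ n).natDegree := by
    rw [roots_T_real, natDegree_T, Finset.card_val, card_image_of_injOn hinj]
    simp
  conv_lhs => rw [← Polynomial.C_leadingCoeff_mul_prod_multiset_X_sub_C hcard]
  rw [leadingCoeff_T, roots_T_real, ← Finset.prod_eq_multiset_prod, prod_image hinj]
  simp

theorem eval_T_real_eq_mul_prod_add (n : ℕ) (y : ℝ) :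
    (T ℝ n).eval y = 2 ^ (n - 1) * ∏ k ∈ range n, (y + cos ((2 * k + 1) * π / (2 * n))) := by
  have h := congrArg (eval (-y)) (T_real_eq_C_mul_prod n)
  simp only [T_eval_neg, Int.cast_negOnePow_natCast, eval_mul, eval_C, eval_prod, eval_sub,
    eval_X, ← neg_add', prod_neg, card_range] at h
  refine mul_left_cancel₀ (pow_ne_zero n (neg_ne_zero.mpr one_ne_zero)) ?_
  rw [h, mul_left_comm]

/-- If `T_n(z) = 0`, some factor `z + c_k` vanishes and both sides are `0`. -/
theorem eval_T_real_div_eval_T_real (n : ℕ) (y z : ℝ) :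
    (T ℝ n).eval y / (T ℝ n).eval z = ∏ k ∈ range n,
      (y + cos ((2 * k + 1) * π / (2 * n))) / (z + cos ((2 * k + 1) * π / (2 * n))) := by
  rw [eval_T_real_eq_mul_prod_add, eval_T_real_eq_mul_prod_add,
    mul_div_mul_left _ _ (by positivity), prod_div_distrib]

end Polynomial.Chebyshev

lemma midpoint_add_mul_pos {a b c : ℝ} (ha : 0 < a) (hab : a < b) (hc : -1 ≤ c) :
    0 < (b + a) / 2 + (b - a) / 2 * c := by
  nlinarith

lemma one_sub_inv_mul_eq_div_affine {a b c l : ℝ} (hab : a ≠ b)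
    (hc : (b + a) / 2 + (b - a) / 2 * c ≠ 0) :
    1 - ((b + a) / 2 + (b - a) / 2 * c)⁻¹ * l
      = ((b + a) / (b - a) - 2 * l / (b - a) + c) / ((b + a) / (b - a) + c) := by
  have hba : b - a ≠ 0 := sub_ne_zero.mpr hab.symm
  set d := (b + a) / 2 + (b - a) / 2 * c with hd
  have hnum : (b + a) / (b - a) - 2 * l / (b - a) + c = 2 / (b - a) * (d - l) := by
    rw [hd]; field_simp; ring
  have hden : (b + a) / (b - a) + c = 2 / (b - a) * d := by
    rw [hd]; field_simp
  rw [hnum, hden, mul_div_mul_left _ _ (div_ne_zero two_ne_zero hba)]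
  field_simp

theorem stmt13_general (lam1 lamM : ℝ) (h1 : 0 < lam1) (h2 : lam1 < lamM)
    (T : ℕ)
    (η : ℕ → ℝ)
    (hη : ∀ t, η t = ((lamM + lam1) / 2
        + ((lamM - lam1) / 2) * Real.cos (((t : ℝ) + 1 / 2) * Real.pi / T))⁻¹)
    (γ : ℝ) (hγ : γ = (lamM + lam1) / (lamM - lam1))
    (x : ℝ → ℝ) (hx : ∀ l, x l = (lamM + lam1) / (lamM - lam1) - 2 * l / (lamM - lam1)) :
    ∀ l : ℝ, ∏ t ∈ Finset.range T, (1 - η t * l)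
      = (Polynomial.Chebyshev.T ℝ T).eval (x l) / (Polynomial.Chebyshev.T ℝ T).eval γ := by
  intro l
  rw [Chebyshev.eval_T_real_div_eval_T_real]
  refine prod_congr rfl fun t _ => ?_
  have hangle : ((t : ℝ) + 1 / 2) * π / T = (2 * t + 1) * π / (2 * T) := by ring
  rw [hη, hangle, hx, hγ]
  exact one_sub_inv_mul_eq_div_affine h2.ne (midpoint_add_mul_pos h1 h2 (neg_one_le_cos _)).ne'

/-- With Chebyshev step sizes `η_t = ((λ_M+λ₁)/2 + ((λ_M−λ₁)/2) cos((t+1/2)π/T))⁻¹`,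
the polynomial `∏_{t<T} (1 − η_t λ)` equals `S(x(λ))/S(γ)` under the affine change of
variable `x(λ) = (λ_M+λ₁)/(λ_M−λ₁) − 2λ/(λ_M−λ₁)`, with `γ = (λ_M+λ₁)/(λ_M−λ₁)` and `S`
the degree-`T` Chebyshev polynomial of the first kind. -/
theorem stmt13 (lam1 lamM : ℝ) (h1 : 0 < lam1) (h2 : lam1 < lamM)
    (T : ℕ) (hT : 1 ≤ T)
    (η : ℕ → ℝ)
    (hη : ∀ t, η t = ((lamM + lam1) / 2
        + ((lamM - lam1) / 2) * Real.cos (((t : ℝ) + 1 / 2) * Real.pi / T))⁻¹)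
    (γ : ℝ) (hγ : γ = (lamM + lam1) / (lamM - lam1))
    (x : ℝ → ℝ) (hx : ∀ l, x l = (lamM + lam1) / (lamM - lam1) - 2 * l / (lamM - lam1)) :
    ∀ l : ℝ, ∏ t ∈ Finset.range T, (1 - η t * l)
      = (Polynomial.Chebyshev.T ℝ T).eval (x l) / (Polynomial.Chebyshev.T ℝ T).eval γ :=
  stmt13_general lam1 lamM h1 h2 T η hη γ hγ x hx
end

section
/- With the Chebyshev step sizes η_t = ((λ_M+λ₁)/2 + ((λ_M−λ₁)/2)cos((t+1/2)π/T))^{−1}, one has sup_{λ₁ ≤ λ ≤ λ_M} |∏_{t=0}^{T−1}(1 − η_t λ)| ≤ 2(1 − 2/(√κ+1))^T where κ = λ_M/λ₁. -/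
/-!
Put `a = (λ_M + λ₁)/2`, `b = (λ_M − λ₁)/2` and let `c_t = cos ((2t+1)π/(2T))` be the roots of the
Chebyshev polynomial `T_T`. Then `1 − η_t λ = ((a − λ)/b + c_t) / (a/b + c_t)`, and since
`T_T(x) = 2^(T−1) ∏ (x + c_t)`, the product equals `T_T((a − λ)/b) / T_T(a/b)`. For `λ ∈ [λ₁, λ_M]`
the numerator lies in `[−1, 1]`. With `u = (√κ + 1)/(√κ − 1)` one has `a/b = (u + u⁻¹)/2`, so the
denominator is `(u^T + u^(−T))/2 ≥ u^T/2`, and `u⁻¹ = 1 − 2/(√κ + 1)`.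
-/

open Polynomial Polynomial.Chebyshev Finset Real

theorem eval_T_real_eq_prod_sub (n : ℕ) (x : ℝ) :
    (T ℝ n).eval x = 2 ^ (n - 1) * ∏ k ∈ range n, (x - cos ((2 * k + 1) * π / (2 * n))) := by
  have hinj := (range n).nodup_map_iff_injOn.mp (roots_T_real_nodup n)
  have hroots : Multiset.card (T ℝ n).roots = (T ℝ n).natDegree := by
    rw [roots_T_real, Finset.card_val, card_image_of_injOn hinj, card_range, natDegree_T,
      Int.natAbs_natCast]
  conv_lhs => rw [← C_leadingCoeff_mul_prod_multiset_X_sub_C hroots]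
  rw [roots_T_real, image_val_of_injOn hinj]
  simp [eval_multiset_prod, prod_eq_multiset_prod]

theorem eval_T_real_eq_prod_add (n : ℕ) (x : ℝ) :
    (T ℝ n).eval x = 2 ^ (n - 1) * ∏ k ∈ range n, (x + cos ((2 * k + 1) * π / (2 * n))) := by
  have h := eval_T_real_eq_prod_sub n (-x)
  simp_rw [T_eval_neg, Int.cast_negOnePow_natCast, ← neg_add', prod_neg, card_range,
    mul_left_comm (2 ^ (n - 1) : ℝ)] at h
  exact mul_left_cancel₀ (pow_ne_zero n (neg_ne_zero.mpr one_ne_zero)) h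

theorem prod_one_sub_inv_mul_eq_eval_T_div (n : ℕ) {a b : ℝ} (hb : b ≠ 0)
    (hT : (T ℝ n).eval (a / b) ≠ 0) (l : ℝ) :
    ∏ k ∈ range n, (1 - (a + b * cos ((2 * k + 1) * π / (2 * n)))⁻¹ * l)
      = (T ℝ n).eval ((a - l) / b) / (T ℝ n).eval (a / b) := by
  rw [eval_T_real_eq_prod_add] at hT
  rw [eval_T_real_eq_prod_add n ((a - l) / b), eval_T_real_eq_prod_add n (a / b),
    mul_div_mul_left _ _ (by positivity), ← prod_div_distrib]
  refine prod_congr rfl fun k hk ↦ ?_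
  have hk := prod_ne_zero_iff.mp (right_ne_zero_of_mul hT) k hk
  generalize cos ((2 * k + 1) * π / (2 * n)) = c at hk ⊢
  have hden : a + b * c ≠ 0 := by
    rw [show a + b * c = b * (a / b + c) by field_simp]
    exact mul_ne_zero hb hk
  field_simp
  ring

theorem eval_T_real_half_add_inv (n : ℕ) {u : ℝ} (hu : 0 < u) :
    (T ℝ n).eval ((u + u⁻¹) / 2) = (u ^ n + (u ^ n)⁻¹) / 2 := by
  have h := T_real_cosh (log u) n
  rwa [cosh_eq, exp_neg, exp_log hu, Int.cast_natCast, cosh_eq, exp_neg, exp_nat_mul,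
    exp_log hu] at h

theorem abs_eval_T_real_div_le (n : ℕ) {x u : ℝ} (hx : |x| ≤ 1) (hu : 0 < u) :
    |(T ℝ n).eval x / (T ℝ n).eval ((u + u⁻¹) / 2)| ≤ 2 * u⁻¹ ^ n := by
  have hden : u ^ n / 2 ≤ |(T ℝ n).eval ((u + u⁻¹) / 2)| := by
    rw [eval_T_real_half_add_inv n hu]
    have : 0 < (u ^ n)⁻¹ := by positivity
    exact le_trans (by linarith) (le_abs_self _)
  calc |(T ℝ n).eval x / (T ℝ n).eval ((u + u⁻¹) / 2)|
      ≤ 1 / (u ^ n / 2) := by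
        rw [abs_div]
        exact div_le_div₀ zero_le_one (abs_eval_T_real_le_one n hx) (by positivity) hden
    _ = 2 * u⁻¹ ^ n := by rw [inv_pow]; field_simp

theorem abs_prod_one_sub_inv_mul_le (n : ℕ) {a b u l : ℝ} (hb : 0 < b) (hu : 0 < u)
    (hab : a / b = (u + u⁻¹) / 2) (hl : |a - l| ≤ b) :
    |∏ k ∈ range n, (1 - (a + b * cos ((2 * k + 1) * π / (2 * n)))⁻¹ * l)| ≤ 2 * u⁻¹ ^ n := by
  have hT : (T ℝ n).eval (a / b) ≠ 0 := by
    rw [hab, eval_T_real_half_add_inv n hu]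
    positivity
  rw [prod_one_sub_inv_mul_eq_eval_T_div n hb.ne' hT, hab]
  refine abs_eval_T_real_div_le n ?_ hu
  rwa [abs_div, abs_of_pos hb, div_le_one hb]

theorem stmt14_general (lam1 lamM : ℝ) (h1 : 0 < lam1) (h2 : lam1 < lamM)
    (T : ℕ)
    (η : ℕ → ℝ)
    (hη : ∀ t, η t = ((lamM + lam1) / 2
        + ((lamM - lam1) / 2) * Real.cos (((t : ℝ) + 1 / 2) * Real.pi / T))⁻¹)
    (κ : ℝ) (hκ : κ = lamM / lam1) :
    (⨆ l : Set.Icc lam1 lamM, |∏ t ∈ Finset.range T, (1 - η t * (l : ℝ))|)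
      ≤ 2 * (1 - 2 / (Real.sqrt κ + 1)) ^ T := by
  subst hκ
  set r := √(lamM / lam1)
  have hr : 1 < r := by rwa [lt_sqrt zero_le_one, one_pow, one_lt_div h1]
  have hlamM : lamM = r ^ 2 * lam1 := by
    rw [sq_sqrt (div_pos (h1.trans h2) h1).le]; field_simp
  set u := (r + 1) / (r - 1)
  have hu : 0 < u := div_pos (by linarith) (by linarith)
  have hab : (lamM + lam1) / 2 / ((lamM - lam1) / 2) = (u + u⁻¹) / 2 := by
    have : r - 1 ≠ 0 := by linarith
    have : r ^ 2 - 1 ≠ 0 := by nlinarith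
    simp only [u, hlamM]
    field_simp
    ring
  have hrate : 1 - 2 / (r + 1) = u⁻¹ := by
    simp only [u, inv_div]
    field_simp
    ring
  have : Nonempty (Set.Icc lam1 lamM) := ⟨⟨lam1, le_rfl, h2.le⟩⟩
  refine ciSup_le fun ⟨l, hl⟩ ↦ ?_
  have hnode (t : ℕ) : ((t : ℝ) + 1 / 2) * π / T = (2 * t + 1) * π / (2 * T) := by ring
  simp only [hη, hnode, hrate]
  refine abs_prod_one_sub_inv_mul_le T (by linarith) hu hab ?_
  rw [abs_le]
  constructor <;> linarith [hl.1, hl.2]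

/-- With the Chebyshev step sizes `η_t = ((λ_M+λ₁)/2 + ((λ_M−λ₁)/2) cos((t+1/2)π/T))⁻¹`,
one has `sup_{λ₁ ≤ λ ≤ λ_M} |∏_{t<T} (1 − η_t λ)| ≤ 2 (1 − 2/(√κ+1))^T`, `κ = λ_M/λ₁`. -/
theorem stmt14 (lam1 lamM : ℝ) (h1 : 0 < lam1) (h2 : lam1 < lamM)
    (T : ℕ) (hT : 1 ≤ T)
    (η : ℕ → ℝ)
    (hη : ∀ t, η t = ((lamM + lam1) / 2
        + ((lamM - lam1) / 2) * Real.cos (((t : ℝ) + 1 / 2) * Real.pi / T))⁻¹)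
    (κ : ℝ) (hκ : κ = lamM / lam1) :
    (⨆ l : Set.Icc lam1 lamM, |∏ t ∈ Finset.range T, (1 - η t * (l : ℝ))|)
      ≤ 2 * (1 - 2 / (Real.sqrt κ + 1)) ^ T :=
  stmt14_general lam1 lamM h1 h2 T η hη κ hκ
end

section
/- Let A be Hermitian positive definite and U a matrix such that I + U^H A^{−1} U is defined. For positive semidefinite Γ, the function φ(Γ) = log det(I + Γ) − tr(Γ) + tr((I+Γ) U^H (A + UU^H)^{−1} U) is maximized over positive semidefinite Γ at Γ* = U^H A^{−1} U, and the maximum value equals log det(I + U^H A^{−1} U). -/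
open Matrix
open scoped ComplexOrder

/-!
With `S = 1 + Γ*`, the push-through form of the Woodbury identity gives
`Uᴴ (A + U Uᴴ)⁻¹ U = 1 - S⁻¹`, so `φ Γ = log det (1 + Γ) + d - tr ((1 + Γ) S⁻¹)`.
Writing `S⁻¹ = yᴴ y`, the bound `φ Γ ≤ log det S = φ Γ*` is `log λ ≤ λ - 1` summed over the
eigenvalues of the positive definite matrix `y (1 + Γ) yᴴ`.
-/

namespace Matrix

variable {n m 𝕜 : Type*} [Fintype n] [DecidableEq n] [RCLike 𝕜]

theorem PosDef.card_add_log_norm_det_le_re_trace {X : Matrix n n 𝕜} (hX : X.PosDef) :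
    (Fintype.card n : ℝ) + Real.log ‖X.det‖ ≤ RCLike.re X.trace := by
  have hpos := hX.eigenvalues_pos
  have hdet : ‖X.det‖ = ∏ i, hX.1.eigenvalues i := by
    rw [hX.1.det_eq_prod_eigenvalues, ← RCLike.ofReal_prod, RCLike.norm_ofReal,
      abs_of_pos (Finset.prod_pos fun i _ => hpos i)]
  have htr : RCLike.re X.trace = ∑ i, hX.1.eigenvalues i := by
    simp [hX.1.trace_eq_sum_eigenvalues]
  rw [hdet, htr, Real.log_prod fun i _ => (hpos i).ne', Finset.card_univ.symm, ← nsmul_one,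
    ← Finset.sum_const, ← Finset.sum_add_distrib]
  exact Finset.sum_le_sum fun i _ => by linarith [Real.log_le_sub_one_of_pos (hpos i)]

open scoped MatrixOrder in
theorem PosDef.log_norm_det_add_card_sub_re_trace_mul_inv_le {S B : Matrix n n 𝕜}
    (hS : S.PosDef) (hB : B.PosDef) :
    Real.log ‖B.det‖ + Fintype.card n - RCLike.re (B * S⁻¹).trace ≤ Real.log ‖S.det‖ := by
  obtain ⟨y, hy⟩ : ∃ y : Matrix n n 𝕜, S⁻¹ = star y * y :=
    CStarAlgebra.nonneg_iff_eq_star_mul_self.mp hS.inv.posSemidef.nonneg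
  have hdet : (y * B * yᴴ).det = B.det * S⁻¹.det := by
    rw [hy, det_mul, det_mul, det_mul, star_eq_conjTranspose]; ring
  have htrace : (y * B * yᴴ).trace = (B * S⁻¹).trace := by
    rw [trace_mul_comm, ← Matrix.mul_assoc, hy, star_eq_conjTranspose, trace_mul_comm]
  have hX : (y * B * yᴴ).PosDef :=
    (hB.posSemidef.mul_mul_conjTranspose_same y).posDef_iff_det_ne_zero.mpr <| by
      rw [hdet]; exact mul_ne_zero hB.det_pos.ne' hS.inv.det_pos.ne'
  have key := hX.card_add_log_norm_det_le_re_trace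
  rw [hdet, htrace, norm_mul, Real.log_mul (by simpa using hB.det_pos.ne')
    (by simpa using hS.inv.det_pos.ne'), det_nonsing_inv, Ring.inverse_eq_inv', norm_inv,
    Real.log_inv] at key
  linarith

theorem mul_inv_add_mul_mul_eq_one_sub_inv {R : Type*} [CommRing R] [Fintype m] [DecidableEq m]
    {A : Matrix n n R} (U : Matrix n m R) (V : Matrix m n R) (hA : IsUnit A)
    (hS : IsUnit (1 + V * A⁻¹ * U)) :
    V * (A + U * V)⁻¹ * U = 1 - (1 + V * A⁻¹ * U)⁻¹ := by
  have woodbury := add_mul_mul_inv_eq_sub A U 1 V hA isUnit_one (by simpa using hS)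
  rw [Matrix.mul_one, inv_one] at woodbury
  set Γ := V * A⁻¹ * U
  have hdet : IsUnit (1 + Γ).det := (isUnit_iff_isUnit_det _).mp hS
  calc V * (A + U * V)⁻¹ * U = Γ - Γ * (1 + Γ)⁻¹ * Γ := by
        simp only [woodbury, Γ, Matrix.mul_sub, Matrix.sub_mul, Matrix.mul_assoc]
    _ = Γ * (1 + Γ)⁻¹ * ((1 + Γ) - Γ) := by
        rw [Matrix.mul_sub, Matrix.mul_assoc Γ _ (1 + Γ), nonsing_inv_mul _ hdet, Matrix.mul_one]
    _ = ((1 + Γ) - 1) * (1 + Γ)⁻¹ := by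
        rw [add_sub_cancel_right, Matrix.mul_one, add_sub_cancel_left]
    _ = 1 - (1 + Γ)⁻¹ := by
        rw [Matrix.sub_mul, mul_nonsing_inv _ hdet, Matrix.one_mul]

end Matrix

/-- Lagrangian dual transform optimality: for `A` Hermitian positive definite (`N×N`)
and `U : N×d`, the function
`φ(Γ) = log|det(I+Γ)| − Re tr(Γ) + Re tr((I+Γ) Uᴴ (A + UUᴴ)⁻¹ U)` is maximized over
positive semidefinite `Γ` at `Γ* = Uᴴ A⁻¹ U`, and the maximum value equals
`log|det(I + Uᴴ A⁻¹ U)|`. -/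
theorem stmt19 {N d : ℕ}
    (A : Matrix (Fin N) (Fin N) ℂ) (hA : A.PosDef)
    (U : Matrix (Fin N) (Fin d) ℂ)
    (φ : Matrix (Fin d) (Fin d) ℂ → ℝ)
    (hφ : ∀ Γ, φ Γ = Real.log ‖(1 + Γ).det‖ - (Γ.trace).re
        + (((1 + Γ) * (Uᴴ * (A + U * Uᴴ)⁻¹ * U)).trace).re)
    (Γs : Matrix (Fin d) (Fin d) ℂ) (hΓs : Γs = Uᴴ * A⁻¹ * U) :
    Γs.PosSemidef ∧
    (∀ Γ : Matrix (Fin d) (Fin d) ℂ, Γ.PosSemidef → φ Γ ≤ φ Γs) ∧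
    φ Γs = Real.log ‖(1 + Uᴴ * A⁻¹ * U).det‖ := by
  have hΓs_psd : Γs.PosSemidef := hΓs ▸ hA.inv.posSemidef.conjTranspose_mul_mul_same U
  have hS : (1 + Γs).PosDef := PosDef.one.add_posSemidef hΓs_psd
  have push_through : Uᴴ * (A + U * Uᴴ)⁻¹ * U = 1 - (1 + Γs)⁻¹ := by
    subst hΓs; exact mul_inv_add_mul_mul_eq_one_sub_inv U Uᴴ hA.isUnit hS.isUnit
  have hφ' : ∀ Γ, φ Γ = Real.log ‖(1 + Γ).det‖ + d - ((1 + Γ) * (1 + Γs)⁻¹).trace.re := by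
    intro Γ
    rw [hφ, push_through, Matrix.mul_sub, Matrix.mul_one, trace_sub, trace_add, trace_one,
      Complex.sub_re, Complex.add_re, Fintype.card_fin, Complex.natCast_re]
    ring
  have hφΓs : φ Γs = Real.log ‖(1 + Γs).det‖ := by
    rw [hφ', mul_nonsing_inv _ ((isUnit_iff_isUnit_det _).mp hS.isUnit), trace_one]
    simp
  refine ⟨hΓs_psd, fun Γ hΓ => ?_, hΓs ▸ hφΓs⟩
  rw [hφ', hφΓs]
  simpa using hS.log_norm_det_add_card_sub_re_trace_mul_inv_le (PosDef.one.add_posSemidef hΓ)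
end
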